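/- Let x : [0,2π] → ℝ be smooth with x(0)=0 and x̂(t) = (t, sin t, cos t − 1, x(t)). Then the Fourier sine coefficient satisfies b_n = (1/π) Σ_{k=0}^n Σ_{q=0}^k C(n,k)C(k,q) sin((n−k)π/2) ⟨(e_4 ⧢ e_2^{⧢(n−k)} ⧢ e_3^{⧢q}) ≻ e_1, S(x̂)⟩, where b_n = (1/π)∫_0^{2π} x(t) sin(nt) dt. -/

import Mathlib

open MeasureTheory intervalIntegral Real Finset

/-- Shuffle product of two words, as the list of all interleavings (with multiplicity). -/
def shuffle {α : Type*} : List α → List α → List (List α)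
  | [], ys => [ys]
  | x :: xs, [] => [x :: xs]
  | x :: xs, y :: ys =>
      (shuffle xs (y :: ys)).map (x :: ·) ++ (shuffle (x :: xs) ys).map (y :: ·)
termination_by u v => u.length + v.length

/-- Iterated integral where the word is given in reverse order (last letter first). -/
noncomputable def sigRev {d : ℕ} (x : ℝ → Fin d → ℝ) (a : ℝ) : List (Fin d) → ℝ → ℝ
  | [] => fun _ => 1
  | i :: w => fun t => ∫ s in a..t, sigRev x a w s * deriv (fun u => x u i) s

/-- Signature coefficient `⟨e_w, S(x)_{a,b}⟩` of the path `x` over `[a,b]`. -/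
noncomputable def sigCoeff {d : ℕ} (x : ℝ → Fin d → ℝ) (a b : ℝ) (w : List (Fin d)) : ℝ :=
  sigRev x a w.reverse b

theorem test {d : ℕ} (x : ℝ → Fin d → ℝ) : sigCoeff x 0 1 [] = 1 := rfl

/-- Shuffle product of two formal sums of words (given as lists with multiplicity). -/
def shuffleList {α : Type*} (us vs : List (List α)) : List (List α) :=
  us.flatMap fun u => vs.flatMap fun v => shuffle u v

/-- `n`-fold shuffle power `w^{⧢ n}` of a word `w`. -/
def shufflePow {α : Type*} (w : List α) : ℕ → List (List α)
  | 0 => [[]]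
  | n + 1 => shuffleList [w] (shufflePow w n)

/-- The Fourier augmentation `x̂(t) = (t, sin t, cos t − 1, x(t)) ∈ ℝ⁴`. -/
noncomputable def fourierAug (x : ℝ → ℝ) : ℝ → Fin 4 → ℝ :=
  fun t => ![t, Real.sin t, Real.cos t - 1, x t]


theorem shuffle_nil_right {α : Type*} (u : List α) : shuffle u [] = [u] := by
  cases u <;> simp [shuffle]

theorem shuffle_comm {α : Type*} (u v : List α) :
    (shuffle u v : Multiset (List α)) = (shuffle v u : Multiset (List α)) := by
  induction u, v using shuffle.induct with
  | case1 ys => simp [shuffle, shuffle_nil_right]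
  | case2 x xs => simp [shuffle, shuffle_nil_right]
  | case3 x xs y ys ih1 ih2 =>
      simp only [shuffle, ← Multiset.coe_add, ← Multiset.map_coe, ih1, ih2]
      exact add_comm _ _

theorem shuffle_single_concat {α : Type*} (a b : α) (w : List α) :
    (shuffle [a] (w ++ [b]) : Multiset (List α)) =
      Multiset.map (· ++ [b]) (shuffle [a] w) + {w ++ [b, a]} := by
  induction w with
  | nil => simp [shuffle]; rfl
  | cons y w ih =>
      show (shuffle [a] (y :: (w ++ [b])) : Multiset (List α)) = _
      simp only [shuffle, shuffle_nil_right, List.map_singleton, ← Multiset.coe_add,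
        ← Multiset.map_coe, ih]
      simp [Multiset.map_map, Function.comp]
      rfl

theorem shuffle_concat {α : Type*} (u v : List α) (a b : α) :
    (shuffle (u ++ [a]) (v ++ [b]) : Multiset (List α)) =
      Multiset.map (· ++ [a]) (shuffle u (v ++ [b])) +
        Multiset.map (· ++ [b]) (shuffle (u ++ [a]) v) := by
  induction u, v using shuffle.induct with
  | case1 v =>
      simp only [List.nil_append, shuffle_single_concat, shuffle]
      simp [add_comm]
  | case2 x xs =>
      rw [show ([] : List α) ++ [b] = [b] by rfl, shuffle_comm (x :: xs ++ [a]) [b],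
        shuffle_comm (x :: xs) [b], shuffle_nil_right]
      rw [show (x :: xs) ++ [a] = (x :: xs) ++ [a] from rfl]
      rw [shuffle_single_concat b a (x :: xs)]
      simp only [← Multiset.map_coe, shuffle_comm [b] (x::xs)]
      simp
  | case3 x xs y ys ih1 ih2 =>
      simp only [List.cons_append] at ih1 ih2
      have e1 : (x :: xs) ++ [a] = x :: (xs ++ [a]) := rfl
      have e2 : (y :: ys) ++ [b] = y :: (ys ++ [b]) := rfl
      rw [e1, e2]
      show (↑(shuffle (x :: (xs ++ [a])) (y :: (ys ++ [b]))) : Multiset (List α)) =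
        Multiset.map (· ++ [a]) (shuffle (x :: xs) (y :: (ys ++ [b]))) +
          Multiset.map (· ++ [b]) (shuffle (x :: (xs ++ [a])) (y :: ys))
      simp only [shuffle, ← Multiset.coe_add, ← Multiset.map_coe, ih1, ih2,
        Multiset.map_add, Multiset.map_map, Function.comp_def, List.cons_append]
      abel

theorem shuffle_reverse {α : Type*} (u v : List α) :
    Multiset.map List.reverse (shuffle u v : Multiset (List α)) =
      (shuffle u.reverse v.reverse : Multiset (List α)) := by
  induction u, v using shuffle.induct with
  | case1 ys => simp [shuffle]
  | case2 x xs => simp [shuffle, shuffle_nil_right]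
  | case3 x xs y ys ih1 ih2 =>
      simp only [shuffle, ← Multiset.coe_add, ← Multiset.map_coe, Multiset.map_add,
        Multiset.map_map, Function.comp_def, List.reverse_cons]
      rw [shuffle_concat, ← List.reverse_cons (a := y) (as := ys), ← List.reverse_cons (a := x) (as := xs), ← ih1, ← ih2]
      simp [Multiset.map_map, Function.comp_def]

theorem sum_map_shuffle_reverse {α : Type*} (f : List α → ℝ) (u v : List α) :
    ((shuffle u v).map (fun w => f w.reverse)).sum =
      ((shuffle u.reverse v.reverse).map f).sum := by
  have h := congrArg (fun M : Multiset (List α) => (Multiset.map f M).sum) (shuffle_reverse u v)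
  simpa [← Multiset.map_coe, Multiset.map_map, Function.comp_def, ← Multiset.sum_coe] using h

theorem flatMap_shuffle_sum {α : Type*} (f : List α → ℝ)
    (hf : ∀ u v, ((shuffle u v).map f).sum = f u * f v) (u : List α) (B : List (List α)) :
    ((B.flatMap fun v => shuffle u v).map f).sum = f u * (B.map f).sum := by
  induction B with
  | nil => simp
  | cons v B ih => simp [List.flatMap_cons, ih, hf, mul_add]

theorem shuffleList_sum {α : Type*} (f : List α → ℝ)
    (hf : ∀ u v, ((shuffle u v).map f).sum = f u * f v) (A B : List (List α)) :
    ((shuffleList A B).map f).sum = (A.map f).sum * (B.map f).sum := by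
  induction A with
  | nil => simp [shuffleList]
  | cons u A ih =>
      simp [shuffleList, List.flatMap_cons, flatMap_shuffle_sum f hf, add_mul]
      simpa [shuffleList] using ih

theorem shufflePow_sum {α : Type*} (f : List α → ℝ)
    (hf : ∀ u v, ((shuffle u v).map f).sum = f u * f v) (hf0 : f [] = 1)
    (w : List α) (m : ℕ) :
    ((shufflePow w m).map f).sum = f w ^ m := by
  induction m with
  | zero => simp [shufflePow, hf0]
  | succ m ih => rw [shufflePow, shuffleList_sum f hf, ih, pow_succ]; simp [mul_comm]

theorem sigRev_continuous {d : ℕ} (x : ℝ → Fin d → ℝ) (a : ℝ)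
    (hD : ∀ i, Continuous (deriv fun t => x t i)) :
    ∀ w, Continuous (sigRev x a w)
  | [] => continuous_const
  | i :: w => by
      have h : Continuous fun s => sigRev x a w s * deriv (fun u => x u i) s :=
        (sigRev_continuous x a hD w).mul (hD i)
      exact intervalIntegral.continuous_primitive (fun c d => h.intervalIntegrable c d) a

theorem sigRev_hasDerivAt {d : ℕ} (x : ℝ → Fin d → ℝ) (a : ℝ)
    (hD : ∀ i, Continuous (deriv fun t => x t i)) (i : Fin d) (w : List (Fin d)) (t : ℝ) :
    HasDerivAt (sigRev x a (i :: w)) (sigRev x a w t * deriv (fun u => x u i) t) t := by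
  have h : Continuous fun s => sigRev x a w s * deriv (fun u => x u i) s :=
    (sigRev_continuous x a hD w).mul (hD i)
  have := (h.integral_hasStrictDerivAt a t).hasDerivAt
  simpa [sigRev] using this

theorem hasDerivAt_list_sum {α : Type*} (l : List α) (f : α → ℝ → ℝ) (f' : α → ℝ) (t : ℝ)
    (h : ∀ a ∈ l, HasDerivAt (fun u => f a u) (f' a) t) :
    HasDerivAt (fun u => (l.map (fun a => f a u)).sum) ((l.map f').sum) t := by
  induction l with
  | nil => simpa using hasDerivAt_const t (0 : ℝ)
  | cons a l ih =>
      have := (h a (by simp)).add (ih fun b hb => h b (by simp [hb]))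
      simp only [List.map_cons, List.sum_cons]
      exact this

theorem list_sum_integral {α : Type*} (l : List α) (g : α → ℝ → ℝ) (a b : ℝ)
    (hg : ∀ w ∈ l, Continuous (g w)) :
    (l.map fun w => ∫ s in a..b, g w s).sum = ∫ s in a..b, (l.map fun w => g w s).sum := by
  induction l with
  | nil => simp
  | cons w l ih =>
      rw [List.map_cons, List.sum_cons, ih fun b hb => hg b (by simp [hb]),
        ← intervalIntegral.integral_add ((hg w (by simp)).intervalIntegrable _ _)
          ((continuous_list_sum l fun b hb => hg b (by simp [hb])).intervalIntegrable _ _)]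
      simp

theorem List.sum_map_mul_right' {α : Type*} (l : List α) (f : α → ℝ) (c : ℝ) :
    (l.map fun a => f a * c).sum = (l.map f).sum * c := by
  induction l with
  | nil => simp
  | cons a l ih => simp [ih, add_mul]

theorem shuffle_sigRev_sum {d : ℕ} (x : ℝ → Fin d → ℝ) (a : ℝ)
    (hD : ∀ i, Continuous (deriv fun t => x t i)) (u v : List (Fin d)) (t : ℝ) :
    ((shuffle u v).map (fun w => sigRev x a w t)).sum = sigRev x a u t * sigRev x a v t := by
  induction u, v using shuffle.induct generalizing t with
  | case1 v => simp [shuffle, sigRev]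
  | case2 i u => simp [shuffle, sigRev]
  | case3 i u j v ih1 ih2 =>
      set F : ℝ → ℝ := fun t => ((shuffle (i :: u) (j :: v)).map (fun w => sigRev x a w t)).sum
        with hFdef
      set G : ℝ → ℝ := fun t => sigRev x a (i :: u) t * sigRev x a (j :: v) t with hGdef
      have hFsplit : ∀ s, F s =
          ((shuffle u (j :: v)).map fun w => sigRev x a (i :: w) s).sum +
          ((shuffle (i :: u) v).map fun w => sigRev x a (j :: w) s).sum := by
        intro s
        simp [hFdef, shuffle, List.map_map, Function.comp_def]
      have hF : ∀ s, HasDerivAt F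
          (sigRev x a u s * sigRev x a (j :: v) s * deriv (fun r => x r i) s +
           sigRev x a (i :: u) s * sigRev x a v s * deriv (fun r => x r j) s) s := by
        intro s
        have h1 : HasDerivAt (fun r => ((shuffle u (j :: v)).map fun w => sigRev x a (i :: w) r).sum)
            (((shuffle u (j :: v)).map fun w => sigRev x a w s * deriv (fun r => x r i) s).sum) s :=
          hasDerivAt_list_sum _ _ _ s fun w _ => sigRev_hasDerivAt x a hD i w s
        have h2 : HasDerivAt (fun r => ((shuffle (i :: u) v).map fun w => sigRev x a (j :: w) r).sum)
            (((shuffle (i :: u) v).map fun w => sigRev x a w s * deriv (fun r => x r j) s).sum) s :=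
          hasDerivAt_list_sum _ _ _ s fun w _ => sigRev_hasDerivAt x a hD j w s
        have := h1.add h2
        rw [List.sum_map_mul_right', List.sum_map_mul_right', ih1, ih2] at this
        exact this.congr_of_eventuallyEq (by filter_upwards with r using hFsplit r)
      have hG : ∀ s, HasDerivAt G
          (sigRev x a u s * sigRev x a (j :: v) s * deriv (fun r => x r i) s +
           sigRev x a (i :: u) s * sigRev x a v s * deriv (fun r => x r j) s) s := by
        intro s
        have := (sigRev_hasDerivAt x a hD i u s).mul (sigRev_hasDerivAt x a hD j v s)
        exact this.congr_deriv (by ring)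
      have hdiff : ∀ s, HasDerivAt (fun r => F r - G r) 0 s := by
        intro s
        have := (hF s).sub (hG s)
        simp only [sub_self] at this
        exact this
      have hconst : F t - G t = F a - G a :=
        is_const_of_deriv_eq_zero (fun s => (hdiff s).differentiableAt)
          (fun s => (hdiff s).deriv) t a
      have hFa : F a = 0 := by
        rw [hFsplit a]
        have e : ∀ (k : Fin d) (w : List (Fin d)), sigRev x a (k :: w) a = 0 := by
          intro k w; simp [sigRev]
        simp [e]
      have hGa : G a = 0 := by
        simp [hGdef, sigRev]
      show F t = G t
      rw [hFa, hGa] at hconst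
      linarith

theorem sigRev_single {d : ℕ} (x : ℝ → Fin d → ℝ) (a : ℝ)
    (hCD : ∀ i, ContDiff ℝ (⊤ : ℕ∞) fun t => x t i) (i : Fin d) (t : ℝ) :
    sigRev x a [i] t = x t i - x a i := by
  have h : sigRev x a [i] t = ∫ s in a..t, deriv (fun u => x u i) s := by
    simp [sigRev]
  rw [h, intervalIntegral.integral_deriv_eq_sub
    (fun s _ => ((hCD i).differentiable (by simp)).differentiableAt)
    (((hCD i).continuous_deriv (by simp)).intervalIntegrable _ _)]

theorem I_pow_im (m : ℕ) : (Complex.I ^ m).im = Real.sin (m * Real.pi / 2) := by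
  have hI : Complex.exp (↑(Real.pi / 2 : ℝ) * Complex.I) = Complex.I := by
    rw [Complex.exp_mul_I, ← Complex.ofReal_cos, ← Complex.ofReal_sin,
      Real.cos_pi_div_two, Real.sin_pi_div_two]
    simp
  rw [← hI, ← Complex.exp_nat_mul]
  have h2 : (m : ℂ) * (↑(Real.pi / 2 : ℝ) * Complex.I) = ↑(m * Real.pi / 2 : ℝ) * Complex.I := by
    push_cast; ring
  rw [h2, Complex.exp_ofReal_mul_I_im]

theorem sin_nat_mul_expand (n : ℕ) (t : ℝ) :
    Real.sin (n * t) = ∑ k ∈ Finset.range (n + 1),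
      (n.choose k : ℝ) * Real.sin ((n - k : ℕ) * Real.pi / 2) *
        (Real.cos t ^ k * Real.sin t ^ (n - k)) := by
  have h1 : ((Complex.exp (↑t * Complex.I)) ^ n).im = Real.sin (n * t) := by
    rw [← Complex.exp_nat_mul]
    have : (n : ℂ) * (↑t * Complex.I) = ↑(n * t : ℝ) * Complex.I := by push_cast; ring
    rw [this, Complex.exp_ofReal_mul_I_im]
  rw [← h1, Complex.exp_mul_I, ← Complex.ofReal_cos, ← Complex.ofReal_sin, add_pow,
    Complex.im_sum]
  apply Finset.sum_congr rfl
  intro k hk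
  have h3 : (↑(Real.cos t) : ℂ) ^ k * (↑(Real.sin t) * Complex.I) ^ (n - k) * (n.choose k : ℂ) =
      ↑((n.choose k : ℝ) * (Real.cos t ^ k * Real.sin t ^ (n - k))) * Complex.I ^ (n - k) := by
    push_cast; ring
  rw [h3, Complex.ofReal_mul', I_pow_im]
  ring

theorem cos_pow_expand (k : ℕ) (t : ℝ) :
    Real.cos t ^ k = ∑ q ∈ Finset.range (k + 1),
      (k.choose q : ℝ) * (Real.cos t - 1) ^ q := by
  have h : Real.cos t = (Real.cos t - 1) + 1 := by ring
  rw [h, add_pow]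
  apply Finset.sum_congr rfl
  intro q hq
  ring

/-- **Fourier coefficient from the signature:**
`b_n = (1/π)∫_0^{2π} x(t) sin(nt) dt` equals
`(1/π) Σ_{k=0}^n Σ_{q=0}^k C(n,k)C(k,q) sin((n−k)π/2) ⟨(e₄ ⧢ e₂^{⧢(n−k)} ⧢ e₃^{⧢q}) ≻ e₁, S(x̂)⟩`. -/
theorem fourier_bn_from_sig (x : ℝ → ℝ) (hx : ContDiff ℝ (⊤ : ℕ∞) x) (hx0 : x 0 = 0) (n : ℕ) :
    (1 / Real.pi) * (∫ t in (0:ℝ)..(2 * Real.pi), x t * Real.sin (n * t)) =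
      (1 / Real.pi) * ∑ k ∈ Finset.range (n + 1), ∑ q ∈ Finset.range (k + 1),
        (n.choose k : ℝ) * (k.choose q : ℝ) * Real.sin ((n - k : ℕ) * Real.pi / 2) *
          ((shuffleList (shuffleList [[(3 : Fin 4)]] (shufflePow [(1 : Fin 4)] (n - k)))
              (shufflePow [(2 : Fin 4)] q)).map
            fun w => sigCoeff (fourierAug x) 0 (2 * Real.pi) (w ++ [(0 : Fin 4)])).sum := by
  have hCD : ∀ i : Fin 4, ContDiff ℝ (⊤ : ℕ∞) fun t => fourierAug x t i := by
    intro i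
    fin_cases i
    · exact contDiff_id
    · exact Real.contDiff_sin
    · exact Real.contDiff_cos.sub contDiff_const
    · exact hx
  have hD : ∀ i : Fin 4, Continuous (deriv fun t => fourierAug x t i) :=
    fun i => (hCD i).continuous_deriv (by simp)
  have s1 : ∀ t, sigRev (fourierAug x) 0 [1] t = Real.sin t := by
    intro t
    rw [sigRev_single (fourierAug x) 0 hCD 1 t]
    show Real.sin t - Real.sin 0 = Real.sin t
    simp
  have s2 : ∀ t, sigRev (fourierAug x) 0 [2] t = Real.cos t - 1 := by
    intro t
    rw [sigRev_single (fourierAug x) 0 hCD 2 t]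
    show (Real.cos t - 1) - (Real.cos 0 - 1) = Real.cos t - 1
    simp
  have s3 : ∀ t, sigRev (fourierAug x) 0 [3] t = x t := by
    intro t
    rw [sigRev_single (fourierAug x) 0 hCD 3 t]
    show x t - x 0 = x t
    simp [hx0]
  have hshuf : ∀ (u v : List (Fin 4)) (t : ℝ),
      ((shuffle u v).map fun w => sigRev (fourierAug x) 0 w.reverse t).sum =
        sigRev (fourierAug x) 0 u.reverse t * sigRev (fourierAug x) 0 v.reverse t := by
    intro u v t
    rw [sum_map_shuffle_reverse (fun w => sigRev (fourierAug x) 0 w t) u v,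
      shuffle_sigRev_sum (fourierAug x) 0 hD]
  have hlist : ∀ (m q : ℕ),
      ((shuffleList (shuffleList [[(3 : Fin 4)]] (shufflePow [(1 : Fin 4)] m))
          (shufflePow [(2 : Fin 4)] q)).map
        fun w => sigCoeff (fourierAug x) 0 (2 * Real.pi) (w ++ [(0 : Fin 4)])).sum =
      ∫ t in (0:ℝ)..(2 * Real.pi), x t * Real.sin t ^ m * (Real.cos t - 1) ^ q := by
    intro m q
    set S := shuffleList (shuffleList [[(3 : Fin 4)]] (shufflePow [(1 : Fin 4)] m))
      (shufflePow [(2 : Fin 4)] q) with hS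
    have hSsum : ∀ t, (S.map fun w => sigRev (fourierAug x) 0 w.reverse t).sum =
        x t * Real.sin t ^ m * (Real.cos t - 1) ^ q := by
      intro t
      have hf : ∀ u v, ((shuffle u v).map fun w => sigRev (fourierAug x) 0 w.reverse t).sum =
          (fun w => sigRev (fourierAug x) 0 w.reverse t) u *
          (fun w => sigRev (fourierAug x) 0 w.reverse t) v := fun u v => hshuf u v t
      rw [hS, shuffleList_sum _ hf, shuffleList_sum _ hf,
        shufflePow_sum _ hf (by simp [sigRev]), shufflePow_sum _ hf (by simp [sigRev])]
      simp only [List.map_cons, List.map_nil, List.sum_cons, List.sum_nil, add_zero,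
        List.reverse_cons, List.reverse_nil, List.nil_append]
      rw [s1, s2, s3]
    have hcoeff : ∀ w : List (Fin 4), sigCoeff (fourierAug x) 0 (2 * Real.pi) (w ++ [(0 : Fin 4)]) =
        ∫ s in (0:ℝ)..(2 * Real.pi), sigRev (fourierAug x) 0 w.reverse s := by
      intro w
      show sigRev (fourierAug x) 0 (w ++ [(0 : Fin 4)]).reverse (2 * Real.pi) = _
      rw [List.reverse_append]
      show sigRev (fourierAug x) 0 ((0 : Fin 4) :: w.reverse) (2 * Real.pi) = _
      have h0 : (fun u => fourierAug x u (0 : Fin 4)) = fun u => u := rfl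
      simp only [sigRev, h0, deriv_id'', mul_one]
    have : (fun w : List (Fin 4) => sigCoeff (fourierAug x) 0 (2 * Real.pi) (w ++ [(0 : Fin 4)])) =
        fun w => ∫ s in (0:ℝ)..(2 * Real.pi), sigRev (fourierAug x) 0 w.reverse s :=
      funext hcoeff
    rw [this, list_sum_integral S _ 0 (2 * Real.pi)
      (fun w _ => sigRev_continuous (fourierAug x) 0 hD w.reverse)]
    exact intervalIntegral.integral_congr fun s _ => hSsum s
  have hcont : ∀ (m q : ℕ), Continuous fun t => x t * Real.sin t ^ m * (Real.cos t - 1) ^ q :=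
    fun m q => (hx.continuous.mul (Real.continuous_sin.pow m)).mul
      ((Real.continuous_cos.sub continuous_const).pow q)
  have hpoint : ∀ t, x t * Real.sin (n * t) =
      ∑ k ∈ Finset.range (n + 1), ∑ q ∈ Finset.range (k + 1),
        (n.choose k : ℝ) * (k.choose q : ℝ) * Real.sin ((n - k : ℕ) * Real.pi / 2) *
          (x t * Real.sin t ^ (n - k) * (Real.cos t - 1) ^ q) := by
    intro t
    rw [sin_nat_mul_expand, Finset.mul_sum]
    apply Finset.sum_congr rfl
    intro k _
    rw [cos_pow_expand k t]
    simp only [Finset.sum_mul, Finset.mul_sum]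
    apply Finset.sum_congr rfl
    intro q _
    ring
  have hkey : (∫ t in (0:ℝ)..(2 * Real.pi), x t * Real.sin (n * t)) =
      ∑ k ∈ Finset.range (n + 1), ∑ q ∈ Finset.range (k + 1),
        (n.choose k : ℝ) * (k.choose q : ℝ) * Real.sin ((n - k : ℕ) * Real.pi / 2) *
          ∫ t in (0:ℝ)..(2 * Real.pi), x t * Real.sin t ^ (n - k) * (Real.cos t - 1) ^ q := by
    rw [intervalIntegral.integral_congr (g := fun t =>
      ∑ k ∈ Finset.range (n + 1), ∑ q ∈ Finset.range (k + 1),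
        (n.choose k : ℝ) * (k.choose q : ℝ) * Real.sin ((n - k : ℕ) * Real.pi / 2) *
          (x t * Real.sin t ^ (n - k) * (Real.cos t - 1) ^ q)) (fun t _ => hpoint t)]
    rw [intervalIntegral.integral_finset_sum]
    · apply Finset.sum_congr rfl
      intro k _
      rw [intervalIntegral.integral_finset_sum]
      · exact Finset.sum_congr rfl fun q _ => intervalIntegral.integral_const_mul _ _
      · intro q _
        exact ((continuous_const.mul (hcont (n - k) q)).intervalIntegrable _ _)
    · intro k _
      exact (continuous_finset_sum _ fun q _ =>
        continuous_const.mul (hcont (n - k) q)).intervalIntegrable _ _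
  rw [hkey]
  congr 1
  apply Finset.sum_congr rfl
  intro k _
  apply Finset.sum_congr rfl
  intro q _
  rw [hlist (n - k) q]
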